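/- For every integer r ≥ 3 there exists a threshold u₀(r) with the following property: if C, C' > 0 and u, v, w are real numbers with v ≥ r−1, w ≥ r−2, u > u₀(r), satisfying C(u,r) = C(v,r) + C(w,r−1) and C' ≤ C(w,r−1) < C(u−1,r−1) − C, and moreover w < u − 2r, then C(v,r−1) + C(w,r−2) − C(u,r−1) > min{1/(4·r!), C'}. -/

import Mathlib

/-!
With `n = r - 1`, `S = C(w, n)`, `T = C(w, n - 1)` and `Δ = C(u, n) - C(v, n)`, the hypothesis reads
`S = C(u, n + 1) - C(v, n + 1)`. Since `(n + 1) C(x, n + 1) = (x - n) C(x, n)`,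
`(n + 1) S = (u - v) C(u, n) + (v - n) Δ`, and `S ≤ (u - v) C(u, n)` (the derivative of `C(·, n + 1)`
is at most `C(·, n)`), so `(v - n) Δ ≤ n S = (w - n + 1) T`. By monotonicity of `C(·, n + 1)` and
Pascal's rule the hypotheses force `u - 1 < v ≤ u`, hence `v - w - 1 > 2n`; together with `T ≥ 1`
and `(n - 1) T ≥ w - n + 2` this gives `T - Δ ≥ 1/2`, which beats `1 / (4 r!)`.
-/

/-- Generalized binomial coefficient `C(x, k) = x(x-1)⋯(x-k+1)/k!` for real `x`. -/
noncomputable def gchoose (x : ℝ) (k : ℕ) : ℝ :=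
  (∏ i ∈ Finset.range k, (x - i)) / (Nat.factorial k)

open Finset

theorem gchoose_eq_ringChoose (x : ℝ) (k : ℕ) : gchoose x k = Ring.choose x k := by
  rw [Ring.choose_eq_smul, ← Polynomial.aeval_eq_smeval, gchoose, smul_eq_mul,
    ← descPochhammer_eval_eq_prod_range, Polynomial.aeval_def, ← Polynomial.eval_map,
    descPochhammer_map, div_eq_inv_mul]

theorem gchoose_add_one_succ (x : ℝ) (k : ℕ) :
    gchoose (x + 1) (k + 1) = gchoose x k + gchoose x (k + 1) := by
  simp only [gchoose_eq_ringChoose, Ring.choose_succ_succ]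

theorem gchoose_natCast_self (k : ℕ) : gchoose k k = 1 := by
  rw [gchoose_eq_ringChoose, Ring.choose_natCast, Nat.choose_self, Nat.cast_one]

theorem succ_mul_gchoose_succ (x : ℝ) (k : ℕ) :
    (k + 1) * gchoose x (k + 1) = (x - k) * gchoose x k := by
  simp only [gchoose, prod_range_succ, Nat.factorial_succ, Nat.cast_mul, Nat.cast_succ]
  field_simp

theorem gchoose_nonneg {k : ℕ} {x : ℝ} (hx : (k : ℝ) - 1 ≤ x) : 0 ≤ gchoose x k := by
  refine div_nonneg (prod_nonneg fun i hi => ?_) (Nat.cast_nonneg _)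
  have : (i : ℝ) + 1 ≤ k := by exact_mod_cast mem_range.mp hi
  linarith

theorem gchoose_le_gchoose {k : ℕ} {x y : ℝ} (hx : (k : ℝ) - 1 ≤ x) (hxy : x ≤ y) :
    gchoose x k ≤ gchoose y k := by
  refine div_le_div_of_nonneg_right (prod_le_prod (fun i hi => ?_) fun i _ => by linarith)
    (Nat.cast_nonneg _)
  have : (i : ℝ) + 1 ≤ k := by exact_mod_cast mem_range.mp hi
  linarith

theorem lt_of_gchoose_lt_gchoose {k : ℕ} {x y : ℝ} (hy : (k : ℝ) - 1 ≤ y)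
    (h : gchoose x k < gchoose y k) : x < y :=
  lt_of_not_ge fun hyx => h.not_ge (gchoose_le_gchoose hy hyx)

theorem one_le_gchoose {k : ℕ} {x : ℝ} (hx : (k : ℝ) ≤ x) : 1 ≤ gchoose x k :=
  gchoose_natCast_self k ▸ gchoose_le_gchoose (by linarith) hx

theorem succ_mul_gchoose_succ_sub (u v : ℝ) (k : ℕ) :
    (k + 1) * (gchoose u (k + 1) - gchoose v (k + 1)) =
      (u - v) * gchoose u k + (v - k) * (gchoose u k - gchoose v k) := by
  linear_combination succ_mul_gchoose_succ u k - succ_mul_gchoose_succ v k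

theorem gchoose_succ_sub_le {k : ℕ} {u v : ℝ} (hk : (k : ℝ) ≤ v) (hvu : v ≤ u) :
    gchoose u (k + 1) - gchoose v (k + 1) ≤ (u - v) * gchoose u k := by
  induction k with
  | zero => simp [gchoose]
  | succ k ih =>
    push_cast at hk
    have hC : 0 ≤ (u - v) * gchoose u k := mul_nonneg (by linarith) (gchoose_nonneg (by linarith))
    refine le_of_mul_le_mul_left ?_ (by positivity : (0 : ℝ) < k + 1 + 1)
    calc ((k : ℝ) + 1 + 1) * (gchoose u (k + 1 + 1) - gchoose v (k + 1 + 1))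
        = (u - v) * gchoose u (k + 1) + (v - (k + 1)) * (gchoose u (k + 1) - gchoose v (k + 1)) :=
          mod_cast succ_mul_gchoose_succ_sub u v (k + 1)
      _ ≤ (u - v) * gchoose u (k + 1) + (v - (k + 1)) * ((u - v) * gchoose u k) := by
          gcongr
          exact ih (by linarith)
      _ ≤ (u - v) * gchoose u (k + 1) + (u - k) * ((u - v) * gchoose u k) := by gcongr; linarith
      _ = (k + 1 + 1) * ((u - v) * gchoose u (k + 1)) := by
          linear_combination (v - u) * succ_mul_gchoose_succ u k

theorem sub_mul_gchoose_sub_gchoose_le {k : ℕ} {u v : ℝ} (hk : (k : ℝ) ≤ v) (hvu : v ≤ u) :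
    (v - k) * (gchoose u k - gchoose v k) ≤ k * (gchoose u (k + 1) - gchoose v (k + 1)) := by
  linarith [succ_mul_gchoose_succ_sub u v k, gchoose_succ_sub_le hk hvu]

theorem one_half_le_gchoose_sub {k : ℕ} {v w Δ : ℝ} (hw : (k : ℝ) + 1 ≤ w) (hvw : w + k + 2 ≤ v)
    (hΔ : (v - (k + 2)) * Δ ≤ (w - (k + 1)) * gchoose w (k + 1)) :
    1 / 2 ≤ gchoose w (k + 1) - Δ := by
  have hT1 : 1 ≤ gchoose w (k + 1) := one_le_gchoose (by push_cast; linarith)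
  have hT2 : w - k ≤ (k + 1) * gchoose w (k + 1) := by
    have := succ_mul_gchoose_succ w k
    nlinarith [one_le_gchoose (k := k) (x := w) (by linarith)]
  -- `(v - k - 2) (T - Δ) ≥ (v - w - 1) T` and `2 (v - w - 1) T ≥ (v - w - 1) + (k + 1) T > v - k - 2`
  refine le_of_mul_le_mul_left ?_ (by linarith : 0 < v - (k + 2))
  nlinarith [mul_le_mul_of_nonneg_left hT1 (by linarith : (0 : ℝ) ≤ v - w - 1)]

/-- Part (2) of the defect estimate: for `r ≥ 3` there is a threshold `u₀(r)` such that
if `C(u,r) = C(v,r) + C(w,r-1)`, `C' ≤ C(w,r-1) < C(u-1,r-1) - C` and `w < u - 2r`,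
then `C(v,r-1) + C(w,r-2) - C(u,r-1) > min{1/(4·r!), C'}`. -/
theorem stmt17 (r : ℕ) (hr : 3 ≤ r) :
    ∃ u0 : ℝ, ∀ C C' u v w : ℝ, 0 < C → 0 < C' →
      (r : ℝ) - 1 ≤ v → (r : ℝ) - 2 ≤ w → u0 < u →
      gchoose u r = gchoose v r + gchoose w (r - 1) →
      C' ≤ gchoose w (r - 1) →
      gchoose w (r - 1) < gchoose (u - 1) (r - 1) - C →
      w < u - 2 * r →
      min (1 / (4 * (Nat.factorial r : ℝ))) C' <
        gchoose v (r - 1) + gchoose w (r - 2) - gchoose u (r - 1) := by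
  obtain ⟨k, rfl⟩ : ∃ k, r = k + 2 + 1 := ⟨r - 3, by omega⟩
  refine ⟨k + 2, fun C C' u v w hC hC' hv hw hu hsum hC'w hCw hwu => ?_⟩
  simp only [Nat.add_sub_cancel, show k + 2 + 1 - 2 = k + 1 by omega] at hsum hC'w hCw ⊢
  push_cast at hv hw hu hwu
  have hvu : v ≤ u := by
    refine (lt_of_gchoose_lt_gchoose (k := k + 2 + 1) (by push_cast; linarith) ?_).le
    linarith [hC'.trans_le hC'w]
  have hv1 : u - 1 < v := by
    refine lt_of_gchoose_lt_gchoose (k := k + 2 + 1) (by push_cast; linarith) ?_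
    have hpascal := gchoose_add_one_succ (u - 1) (k + 2)
    rw [sub_add_cancel] at hpascal
    linarith
  have hΔ : (v - (k + 2)) * (gchoose u (k + 2) - gchoose v (k + 2)) ≤
      (w - (k + 1)) * gchoose w (k + 1) := by
    have hmono := sub_mul_gchoose_sub_gchoose_le (k := k + 2) (by push_cast; linarith) hvu
    have hstep := succ_mul_gchoose_succ w (k + 1)
    rw [hsum, add_sub_cancel_left] at hmono
    rw [show k + 1 + 1 = k + 2 from rfl] at hstep
    push_cast at hmono hstep
    linarith
  have hhalf := one_half_le_gchoose_sub (by linarith) (by linarith) hΔ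
  have hfact : (1 : ℝ) ≤ (k + 2 + 1).factorial := by exact_mod_cast Nat.factorial_pos _
  calc min (1 / (4 * ((k + 2 + 1).factorial : ℝ))) C' ≤ 1 / (4 * (k + 2 + 1).factorial) :=
        min_le_left _ _
    _ < 1 / 2 := one_div_lt_one_div_of_lt (by norm_num) (by linarith)
    _ ≤ _ := hhalf
    _ = _ := by ring
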